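/- arXiv:1610.01423 — 7 statements merged into one kernel-verified Lean document; each statement's English description precedes it below -/
import Mathlib

section
/- If a family of sets $(V_i)_{i \in S}$ (indexed by a finite set $S$ of processes, with $V_i \subseteq S$ for all $i$) satisfies self-inclusion ($i \in V_i$), containment (for all $i,j$, $V_i \subseteq V_j$ or $V_j \subseteq V_i$), and immediacy ($i \in V_j \Rightarrow V_i \subseteq V_j$), then there exists a process $i$ with $V_i = \{i' \in S : V_{i'} = V_i\}$, i.e., the minimal view consists exactly of the processes that share it. -/
/-- In any immediate snapshot assignment on a finite set `S`,
there exists a process `i` whose view consists exactly of the processes sharing it. -/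
theorem stmt0 {α : Type*} [DecidableEq α] (S : Finset α) (V : α → Finset α)
    (hS : S.Nonempty)
    (hsub : ∀ i ∈ S, V i ⊆ S)
    (hself : ∀ i ∈ S, i ∈ V i)
    (hcont : ∀ i ∈ S, ∀ j ∈ S, V i ⊆ V j ∨ V j ⊆ V i)
    (himm : ∀ i ∈ S, ∀ j ∈ S, i ∈ V j → V i ⊆ V j) :
    ∃ i ∈ S, V i = S.filter (fun i' => V i' = V i) := by
  obtain ⟨i, hiS, hmin⟩ := S.exists_min_image (fun j => (V j).card) hS
  refine ⟨i, hiS, ?_⟩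
  ext j
  simp only [Finset.mem_filter]
  constructor
  · intro hj
    have hjS : j ∈ S := hsub i hiS hj
    have hsubij : V j ⊆ V i := himm j hjS i hiS hj
    exact ⟨hjS, Finset.eq_of_subset_of_card_le hsubij (hmin j hjS)⟩
  · rintro ⟨hjS, heq⟩
    exact heq ▸ hself j hjS
end

section
/- In any immediate snapshot assignment on a finite set $S$ of processes, for each $k \geq 1$, at most $k$ processes have a view of cardinality at most $k$. -/
/-- In any immediate snapshot assignment on a finite set `S`,
for each `k ≥ 1`, at most `k` processes have a view of cardinality at most `k`. -/
theorem stmt2 {α : Type*} [DecidableEq α] (S : Finset α) (V : α → Finset α) (k : ℕ)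
    (hk : 1 ≤ k)
    (hsub : ∀ i ∈ S, V i ⊆ S)
    (hself : ∀ i ∈ S, i ∈ V i)
    (hcont : ∀ i ∈ S, ∀ j ∈ S, V i ⊆ V j ∨ V j ⊆ V i)
    (himm : ∀ i ∈ S, ∀ j ∈ S, i ∈ V j → V i ⊆ V j) :
    (S.filter (fun i => (V i).card ≤ k)).card ≤ k := by
  set T := S.filter (fun i => (V i).card ≤ k) with hT
  rcases T.eq_empty_or_nonempty with h | h
  · simp [h]
  · obtain ⟨m, hmT, hmax⟩ := T.exists_max_image (fun i => (V i).card) h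
    have hmS : m ∈ S := (Finset.mem_filter.mp hmT).1
    have hmk : (V m).card ≤ k := (Finset.mem_filter.mp hmT).2
    have hTsub : T ⊆ V m := by
      intro i hiT
      have hiS : i ∈ S := (Finset.mem_filter.mp hiT).1
      rcases hcont i hiS m hmS with hc | hc
      · exact hc (hself i hiS)
      · have : V m = V i := Finset.eq_of_subset_of_card_le hc (hmax i hiT)
        rw [this]; exact hself i hiS
    exact le_trans (Finset.card_le_card hTsub) hmk
end

section
/- If every contention set of an immediate snapshot assignment on a finite nonempty set $S$ has cardinality at most $k$, then the minimal view has cardinality at most $k$, i.e., there exists a process whose view contains at most $k$ processes (a $k$-leader). -/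
/-- If every contention set has cardinality at most `k`, then some
process has a view of cardinality at most `k` (a `k`-leader exists). -/
theorem stmt5 {α : Type*} [DecidableEq α] (S : Finset α) (V : α → Finset α) (k : ℕ)
    (hS : S.Nonempty)
    (hsub : ∀ i ∈ S, V i ⊆ S)
    (hself : ∀ i ∈ S, i ∈ V i)
    (hcont : ∀ i ∈ S, ∀ j ∈ S, V i ⊆ V j ∨ V j ⊆ V i)
    (himm : ∀ i ∈ S, ∀ j ∈ S, i ∈ V j → V i ⊆ V j)
    (hbound : ∀ C : Finset α, C ⊆ S → (∀ i ∈ C, ∀ j ∈ C, i ∈ V j ∧ j ∈ V i) →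
      C.card ≤ k) :
    ∃ i ∈ S, (V i).card ≤ k := by
  obtain ⟨i, hi, hmin⟩ := S.exists_min_image (fun i => (V i).card) hS
  refine ⟨i, hi, ?_⟩
  have key : ∀ a ∈ V i, V a = V i := by
    intro a ha
    have haS := hsub i hi ha
    exact Finset.eq_of_subset_of_card_le (himm a haS i hi ha) (hmin a haS)
  refine hbound (V i) (hsub i hi) ?_
  intro a ha b hb
  constructor
  · rw [key b hb]; exact ha
  · rw [key a ha]; exact hb
end

section
/- In a two-level immediate snapshot on a finite nonempty set $S$ in which every contention set (set of processes with pairwise equal carriers) has cardinality at most $k$, there exists a process $\ell$ with $|V^1_\ell| \leq k$ (a leader) such that $\ell \in V^2_j$ for every process $j \in S$ (the leader is visible to every process). -/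
/-- In a two-level immediate snapshot in which every contention set
(set of processes with pairwise equal carriers) has cardinality at most `k`, there
is a `k`-leader visible to every process. -/
theorem stmt7 {α : Type*} [DecidableEq α] (S : Finset α) (V1 V2 : α → Finset α) (k : ℕ)
    (hS : S.Nonempty)
    (hsub1 : ∀ i ∈ S, V1 i ⊆ S)
    (hself1 : ∀ i ∈ S, i ∈ V1 i)
    (hcont1 : ∀ i ∈ S, ∀ j ∈ S, V1 i ⊆ V1 j ∨ V1 j ⊆ V1 i)
    (himm1 : ∀ i ∈ S, ∀ j ∈ S, i ∈ V1 j → V1 i ⊆ V1 j)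
    (hsub2 : ∀ i ∈ S, V2 i ⊆ S)
    (hself2 : ∀ i ∈ S, i ∈ V2 i)
    (hcont2 : ∀ i ∈ S, ∀ j ∈ S, V2 i ⊆ V2 j ∨ V2 j ⊆ V2 i)
    (himm2 : ∀ i ∈ S, ∀ j ∈ S, i ∈ V2 j → V2 i ⊆ V2 j)
    (hcompat : ∀ i ∈ S, ∀ j ∈ S, i ∈ V2 j → V1 i ⊆ V1 j)
    (hbound : ∀ C : Finset α, C ⊆ S →
      (∀ i ∈ C, ∀ j ∈ C, (V2 i).biUnion V1 = (V2 j).biUnion V1) → C.card ≤ k) :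
    ∃ ℓ ∈ S, (V1 ℓ).card ≤ k ∧ ∀ j ∈ S, ℓ ∈ V2 j := by
  -- pick m minimizing |V2 m|
  obtain ⟨m, hmS, hmmin⟩ := S.exists_min_image (fun i => (V2 i).card) hS
  -- V2 m is contained in every V2 j
  have hGmin : ∀ j ∈ S, V2 m ⊆ V2 j := by
    intro j hj
    rcases hcont2 m hmS j hj with h | h
    · exact h
    · have : V2 j = V2 m := Finset.eq_of_subset_of_card_le h (hmmin j hj)
      exact this ▸ Finset.Subset.refl _
  -- pick ℓ ∈ V2 m minimizing |V1 ℓ|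
  obtain ⟨ℓ, hℓG, hℓmin⟩ := (V2 m).exists_min_image (fun i => (V1 i).card)
    ⟨m, hself2 m hmS⟩
  have hℓS : ℓ ∈ S := hsub2 m hmS hℓG
  refine ⟨ℓ, hℓS, ?_, fun j hj => hGmin j hj hℓG⟩
  -- the key claim: every x ∈ V1 ℓ has carrier equal to ⋃_{j ∈ V2 m} V1 j
  have key : ∀ x ∈ V1 ℓ, (V2 x).biUnion V1 = (V2 m).biUnion V1 := by
    intro x hx
    have hxS : x ∈ S := hsub1 ℓ hℓS hx
    apply Finset.Subset.antisymm
    · -- car(x) ⊆ V1 x ⊆ V1 ℓ ⊆ ⋃_{j ∈ V2 m} V1 j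
      intro y hy
      obtain ⟨j, hjV2x, hyV1j⟩ := Finset.mem_biUnion.mp hy
      have hjS : j ∈ S := hsub2 x hxS hjV2x
      have h1 : y ∈ V1 x := hcompat j hjS x hxS hjV2x hyV1j
      have h2 : y ∈ V1 ℓ := himm1 x hxS ℓ hℓS hx h1
      exact Finset.mem_biUnion.mpr ⟨ℓ, hℓG, h2⟩
    · exact Finset.biUnion_subset_biUnion_of_subset_left _ (hGmin x hxS)
  have hcontention : ∀ i ∈ V1 ℓ, ∀ j ∈ V1 ℓ,
      (V2 i).biUnion V1 = (V2 j).biUnion V1 := by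
    intro i hi j hj
    rw [key i hi, key j hj]
  exact hbound (V1 ℓ) (hsub1 ℓ hℓS) hcontention
end

section
/- In a two-level immediate snapshot on a finite nonempty set $S$, if every contention set has cardinality at most $k$, then assigning to each process $i$ the value $\mathrm{dec}(i)$ proposed by the minimum-id process among the $k$-leaders contained in $V^2_i$ yields a $k$-set-agreement: the set $\{\mathrm{dec}(i) : i \in S\}$ has cardinality at most $k$ and each decided value is the proposal of some process in $S$. -/
/-- Deciding the proposal of the least-id `k`-leader in one's
second-round view yields `k`-set agreement: at most `k` distinct decisions,
each being some process's proposal. -/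
theorem stmt8 {α : Type*} [LinearOrder α] {β : Type*} [DecidableEq α] [DecidableEq β]
    (S : Finset α) (V1 V2 : α → Finset α) (k : ℕ)
    (v : α → β) (dec : α → β)
    (hS : S.Nonempty)
    (hsub1 : ∀ i ∈ S, V1 i ⊆ S)
    (hself1 : ∀ i ∈ S, i ∈ V1 i)
    (hcont1 : ∀ i ∈ S, ∀ j ∈ S, V1 i ⊆ V1 j ∨ V1 j ⊆ V1 i)
    (himm1 : ∀ i ∈ S, ∀ j ∈ S, i ∈ V1 j → V1 i ⊆ V1 j)
    (hsub2 : ∀ i ∈ S, V2 i ⊆ S)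
    (hself2 : ∀ i ∈ S, i ∈ V2 i)
    (hcont2 : ∀ i ∈ S, ∀ j ∈ S, V2 i ⊆ V2 j ∨ V2 j ⊆ V2 i)
    (himm2 : ∀ i ∈ S, ∀ j ∈ S, i ∈ V2 j → V2 i ⊆ V2 j)
    (hcompat : ∀ i ∈ S, ∀ j ∈ S, i ∈ V2 j → V1 i ⊆ V1 j)
    (hbound : ∀ C : Finset α, C ⊆ S →
      (∀ i ∈ C, ∀ j ∈ C, (V2 i).biUnion V1 = (V2 j).biUnion V1) → C.card ≤ k)
    (hdec : ∀ i ∈ S, ∃ ℓ ∈ (V2 i).filter (fun ℓ => (V1 ℓ).card ≤ k),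
      (∀ ℓ' ∈ (V2 i).filter (fun ℓ' => (V1 ℓ').card ≤ k), ℓ ≤ ℓ') ∧ dec i = v ℓ) :
    (S.image dec).card ≤ k ∧ ∀ i ∈ S, ∃ p ∈ S, dec i = v p := by
  classical
  -- The set of all k-leaders in S
  set L : Finset α := S.filter (fun ℓ => (V1 ℓ).card ≤ k) with hL
  -- L is nonempty
  obtain ⟨i0, hi0⟩ := hS
  obtain ⟨ℓ0, hℓ0, _, _⟩ := hdec i0 hi0
  rw [Finset.mem_filter] at hℓ0
  have hLne : L.Nonempty :=
    ⟨ℓ0, Finset.mem_filter.mpr ⟨hsub2 i0 hi0 hℓ0.1, hℓ0.2⟩⟩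
  -- pick T in L with maximal |V1 T|
  obtain ⟨T, hTL, hTmax⟩ := Finset.exists_max_image L (fun ℓ => (V1 ℓ).card) hLne
  have hTS : T ∈ S := (Finset.mem_filter.mp hTL).1
  have hTk : (V1 T).card ≤ k := (Finset.mem_filter.mp hTL).2
  -- every ℓ ∈ L satisfies V1 ℓ ⊆ V1 T
  have hsubT : ∀ ℓ ∈ L, V1 ℓ ⊆ V1 T := by
    intro ℓ hℓ
    have hℓS : ℓ ∈ S := (Finset.mem_filter.mp hℓ).1
    rcases hcont1 ℓ hℓS T hTS with h | h
    · exact h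
    · have := Finset.eq_of_subset_of_card_le h (hTmax ℓ hℓ)
      exact le_of_eq this.symm
  -- hence L ⊆ V1 T, so |L| ≤ k
  have hLsub : L ⊆ V1 T := fun ℓ hℓ =>
    hsubT ℓ hℓ (hself1 ℓ (Finset.mem_filter.mp hℓ).1)
  have hLcard : L.card ≤ k := le_trans (Finset.card_le_card hLsub) hTk
  constructor
  · -- image dec ⊆ image v over L
    have himg : S.image dec ⊆ L.image v := by
      intro x hx
      obtain ⟨i, hi, rfl⟩ := Finset.mem_image.mp hx
      obtain ⟨ℓ, hℓ, _, hdv⟩ := hdec i hi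
      rw [Finset.mem_filter] at hℓ
      exact Finset.mem_image.mpr
        ⟨ℓ, Finset.mem_filter.mpr ⟨hsub2 i hi hℓ.1, hℓ.2⟩, hdv.symm⟩
    calc (S.image dec).card ≤ (L.image v).card := Finset.card_le_card himg
      _ ≤ L.card := Finset.card_image_le
      _ ≤ k := hLcard
  · intro i hi
    obtain ⟨ℓ, hℓ, _, hdv⟩ := hdec i hi
    rw [Finset.mem_filter] at hℓ
    exact ⟨ℓ, hsub2 i hi hℓ.1, hdv⟩
end

section
/- In the model of $k$-concurrency, calls to a $k$-set-agreement object simulated by 'scan memory, adopt a previously written decision if present, else decide own input and write it' decide at most $k$ distinct values: any two processes deciding their own inputs must have been concurrently active, and at most $k$ processes are concurrently active, so the set of self-decided (hence of all decided) values has size at most $k$. -/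
/-- In a `k`-concurrent execution (at every time, at most `k`
processes have a pending operation), any set `D` of self-deciders, whose
operation intervals pairwise intersect, has cardinality at most `k`. -/
theorem stmt13 {ι : Type*} [Fintype ι] [DecidableEq ι] (k : ℕ)
    (s f : ι → ℝ) (hsf : ∀ p, s p < f p)
    (hconc : ∀ t : ℝ, (Finset.univ.filter (fun p => s p ≤ t ∧ t ≤ f p)).card ≤ k)
    (D : Finset ι)
    (hD : ∀ p ∈ D, ∀ q ∈ D, ¬ (f p < s q) ∧ ¬ (f q < s p)) :
    D.card ≤ k := by
  rcases D.eq_empty_or_nonempty with rfl | hne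
  · simp
  obtain ⟨p₀, hp₀, hmax⟩ := D.exists_max_image s hne
  calc D.card ≤ (Finset.univ.filter (fun p => s p ≤ s p₀ ∧ s p₀ ≤ f p)).card := by
        apply Finset.card_le_card
        intro q hq
        simp only [Finset.mem_filter, Finset.mem_univ, true_and]
        exact ⟨hmax q hq, le_of_not_gt (hD q hq p₀ hp₀).1⟩
    _ ≤ k := hconc _
end

section
/- In an immediate snapshot assignment on a finite set $S$, the distinct views $V_{i_1} \subsetneq V_{i_2} \subsetneq \dots \subsetneq V_{i_m}$ partition $S$ into 'concurrency classes': process $j$ lies in class $t$ iff $V_j = V_{i_t}$, class $t$ equals $V_{i_t} \setminus V_{i_{t-1}}$ (with $V_{i_0} = \emptyset$), and $V_{i_m} = S$. -/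
/-- The distinct views of an immediate snapshot assignment,
enumerated as a strictly increasing chain `V (i 0) ⊂ ⋯ ⊂ V (i (m-1))`, partition
`S` into concurrency classes: `j` has view `V (i t)` iff
`j ∈ V (i t) \ V (i (t-1))` (with the convention `V (i (-1)) = ∅`), and the
largest view is all of `S`. -/
theorem stmt17 {α : Type*} [DecidableEq α] (S : Finset α) (V : α → Finset α)
    (hS : S.Nonempty)
    (hsub : ∀ i ∈ S, V i ⊆ S)
    (hself : ∀ i ∈ S, i ∈ V i)
    (hcont : ∀ i ∈ S, ∀ j ∈ S, V i ⊆ V j ∨ V j ⊆ V i)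
    (himm : ∀ i ∈ S, ∀ j ∈ S, i ∈ V j → V i ⊆ V j)
    (m : ℕ) (hm : 0 < m) (i : ℕ → α)
    (hmem : ∀ t < m, i t ∈ S)
    (hchain : ∀ t t', t < t' → t' < m → V (i t) ⊂ V (i t'))
    (hcover : ∀ j ∈ S, ∃ t < m, V j = V (i t)) :
    (∀ j ∈ S, ∀ t < m,
      (V j = V (i t) ↔
        j ∈ V (i t) ∧ j ∉ (if t = 0 then (∅ : Finset α) else V (i (t - 1))))) ∧
    V (i (m - 1)) = S := by
  constructor
  · intro j hj t ht
    constructor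
    · intro hVj
      refine ⟨hVj ▸ hself j hj, ?_⟩
      split_ifs with h0
      · simp
      · intro hjprev
        have ht1 : t - 1 < m := lt_of_le_of_lt (Nat.sub_le _ _) ht
        have hsub' : V j ⊆ V (i (t - 1)) :=
          himm j hj (i (t - 1)) (hmem _ ht1) hjprev
        have hlt : V (i (t - 1)) ⊂ V (i t) :=
          hchain _ _ (Nat.sub_lt (Nat.pos_of_ne_zero h0) one_pos) ht
        exact absurd (hVj ▸ hsub') hlt.2
    · rintro ⟨hjt, hjprev⟩
      have hsub' : V j ⊆ V (i t) := himm j hj (i t) (hmem _ ht) hjt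
      obtain ⟨s, hs, hVs⟩ := hcover j hj
      rcases lt_trichotomy s t with hlt | heq | hgt
      · exfalso
        have h0 : t ≠ 0 := fun h => by omega
        rw [if_neg h0] at hjprev
        have : V (i s) ⊆ V (i (t - 1)) := by
          rcases eq_or_lt_of_le (by omega : s ≤ t - 1) with h | h
          · exact h ▸ le_refl _
          · exact (hchain _ _ h (by omega)).subset
        exact hjprev (this (hVs ▸ hself j hj))
      · rw [hVs, heq]
      · exfalso
        have : V (i t) ⊂ V (i s) := hchain _ _ hgt hs
        exact this.2 (hVs ▸ hsub')
  · apply Finset.Subset.antisymm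
    · exact hsub _ (hmem _ (Nat.sub_lt hm one_pos))
    · intro j hj
      obtain ⟨t, ht, hVt⟩ := hcover j hj
      have : V (i t) ⊆ V (i (m - 1)) := by
        rcases eq_or_lt_of_le (by omega : t ≤ m - 1) with h | h
        · exact h ▸ le_refl _
        · exact (hchain _ _ h (by omega)).subset
      exact this (hVt ▸ hself j hj)
end
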